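/- Let 0 → A → B → C → 0 be a short exact sequence of finitely generated abelian groups. Writing G∧ = lim_n G/nG for the profinite completion of an abelian group G, the natural map G → G∧ is injective for G finitely generated, and the induced sequence of cokernels 0 → A∧/A → B∧/B → C∧/C → 0 is exact. -/

import Mathlib

universe u

/-! For an abelian group `G`, the profinite completion `G∧ = lim_n G/nG` is realized as
the subgroup of `∏ n : ℕ+, G/nG` of compatible families, where the transition maps
`G/nG → G/mG` for `m ∣ n` are induced by the identity of `G`. -/

/-- The subgroup `nG = {n • g : g ∈ G}` of an abelian group `G`. -/
def nMul (G : Type*) [AddCommGroup G] (n : ℕ) : AddSubgroup G where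
  carrier := Set.range fun x : G => n • x
  add_mem' := by rintro _ _ ⟨x, rfl⟩ ⟨y, rfl⟩; exact ⟨x + y, smul_add n x y⟩
  zero_mem' := ⟨0, smul_zero n⟩
  neg_mem' := by rintro _ ⟨x, rfl⟩; exact ⟨-x, smul_neg n x⟩

theorem nMul_le (G : Type*) [AddCommGroup G] {m n : ℕ} (h : m ∣ n) :
    nMul G n ≤ nMul G m := by
  rintro _ ⟨x, rfl⟩
  obtain ⟨c, rfl⟩ := h
  exact ⟨c • x, smul_smul m c x⟩

/-- The transition map `G/nG → G/mG` for `m ∣ n`, induced by the identity of `G`. -/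
def transMap (G : Type*) [AddCommGroup G] (m n : ℕ) (h : m ∣ n) :
    G ⧸ nMul G n →+ G ⧸ nMul G m :=
  QuotientAddGroup.map _ _ (AddMonoidHom.id G) (nMul_le G h)

/-- The profinite completion `G∧ = lim_n G/nG`, realized as the subgroup of
`∏ n : ℕ+, G/nG` consisting of compatible families. -/
def PCompletion (G : Type*) [AddCommGroup G] :
    AddSubgroup (∀ n : ℕ+, G ⧸ nMul G (n : ℕ)) where
  carrier := { f | ∀ (m n : ℕ+) (h : (m : ℕ) ∣ (n : ℕ)), transMap G m n h (f n) = f m }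
  add_mem' := by
    intro f g hf hg m n h
    simp only [Pi.add_apply, map_add, hf m n h, hg m n h]
  zero_mem' := by intro m n h; simp
  neg_mem' := by
    intro f hf m n h
    simp only [Pi.neg_apply, map_neg, hf m n h]

/-- The map `G/nG → H/nH` induced by a homomorphism `φ : G → H`. -/
def quotMap {G H : Type*} [AddCommGroup G] [AddCommGroup H] (φ : G →+ H) (n : ℕ) :
    G ⧸ nMul G n →+ H ⧸ nMul H n :=
  QuotientAddGroup.map _ _ φ (by rintro _ ⟨x, rfl⟩; exact ⟨φ x, (map_nsmul φ n x).symm⟩)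

theorem transMap_quotMap {G H : Type*} [AddCommGroup G] [AddCommGroup H] (φ : G →+ H)
    (m n : ℕ) (h : m ∣ n) (x : G ⧸ nMul G n) :
    transMap H m n h (quotMap φ n x) = quotMap φ m (transMap G m n h x) := by
  refine QuotientAddGroup.induction_on x fun g => ?_
  rfl

/-- The homomorphism `G∧ → H∧` induced componentwise by a homomorphism `φ : G → H`. -/
def completionMap {G H : Type*} [AddCommGroup G] [AddCommGroup H] (φ : G →+ H) :
    PCompletion G →+ PCompletion H where
  toFun f := ⟨fun n => quotMap φ n (f.1 n), by
    intro m n h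
    rw [transMap_quotMap, f.2 m n h]⟩
  map_zero' := by ext n; simp
  map_add' f g := by ext n; simp

/-- The natural map `G → G∧` sending `g` to the family of its residues `(g mod nG)ₙ`. -/
def toCompletion (G : Type*) [AddCommGroup G] : G →+ PCompletion G where
  toFun g := ⟨fun n => QuotientAddGroup.mk g, by
    intro m n h
    rfl⟩
  map_zero' := by ext n; simp
  map_add' g g' := by ext n; simp

theorem completionMap_toCompletion {G H : Type*} [AddCommGroup G] [AddCommGroup H]
    (φ : G →+ H) (x : G) :
    completionMap φ (toCompletion G x) = toCompletion H (φ x) := by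
  apply Subtype.ext
  funext n
  simp [completionMap, toCompletion, quotMap]

/-- The map `G∧/G → H∧/H` on cokernels of the natural maps `G → G∧`, `H → H∧`,
induced by a homomorphism `φ : G → H`. -/
def cokerMap {G H : Type*} [AddCommGroup G] [AddCommGroup H] (φ : G →+ H) :
    PCompletion G ⧸ (toCompletion G).range →+ PCompletion H ⧸ (toCompletion H).range :=
  QuotientAddGroup.map _ _ (completionMap φ) (by
    rintro _ ⟨x, rfl⟩
    exact ⟨φ x, (completionMap_toCompletion φ x).symm⟩)

/-!
The natural map `G → G∧` is injective by Krull's intersection theorem for the `ℤ`-module `G`.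
Completion is exact on finitely generated groups: it preserves injections by the Artin–Rees
lemma, while surjectivity and exactness in the middle hold for each `G/nG` and pass to the limit
because these levels are finite (an inverse limit of nonempty finite sets is nonempty). The snake
lemma for the map from `0 → A → B → C → 0` to its completion, whose vertical maps are injective,
then gives the exactness of the cokernels.
-/

open QuotientAddGroup

section Quotients

variable {G H K : Type*} [AddCommGroup G] [AddCommGroup H] [AddCommGroup K]

theorem mem_nMul {n : ℕ} {x : G} : x ∈ nMul G n ↔ ∃ y, n • y = x := Iff.rfl

theorem nsmul_eq_zero_of_quotient_nMul (n : ℕ) (x : G ⧸ nMul G n) : n • x = 0 :=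
  induction_on x fun g => (eq_zero_iff _).2 ⟨g, rfl⟩

theorem finite_quotient_nMul [AddGroup.FG G] {n : ℕ} (hn : 0 < n) : Finite (G ⧸ nMul G n) :=
  AddCommGroup.finite_of_fg_isAddTorsion _ fun x =>
    isOfFinAddOrder_iff_nsmul_eq_zero.2 ⟨n, hn, nsmul_eq_zero_of_quotient_nMul n x⟩

@[simp]
theorem quotMap_mk (φ : G →+ H) (n : ℕ) (x : G) : quotMap φ n (mk x) = mk (φ x) := rfl

theorem quotMap_surjective {φ : G →+ H} (hφ : Function.Surjective φ) (n : ℕ) :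
    Function.Surjective (quotMap φ n) :=
  fun y => induction_on y fun h => (hφ h).elim fun x hx => ⟨mk x, congrArg mk hx⟩

theorem ker_quotMap_le_range {f : G →+ H} {g : H →+ K} (hg : Function.Surjective g)
    (hfg : f.range = g.ker) (n : ℕ) : (quotMap g n).ker ≤ (quotMap f n).range := by
  intro y hy
  obtain ⟨b, rfl⟩ := mk_surjective y
  obtain ⟨c, hc : n • c = g b⟩ := (eq_zero_iff _).1 hy
  obtain ⟨b₁, rfl⟩ := hg c
  obtain ⟨a, ha⟩ : b - n • b₁ ∈ f.range := by
    rw [hfg, AddMonoidHom.mem_ker, map_sub, map_nsmul, hc, sub_self]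
  refine ⟨mk a, ?_⟩
  rw [quotMap_mk, ha, eq_iff_sub_mem]
  exact ⟨-b₁, by simp⟩

end Quotients

section IntAdic

variable {G : Type*} [AddCommGroup G]

theorem mem_span_pow_smul_iff (n i : ℕ) (N : Submodule ℤ G) (x : G) :
    x ∈ Ideal.span {(n : ℤ)} ^ i • N ↔ ∃ y ∈ N, (n ^ i) • y = x := by
  rw [Ideal.span_singleton_pow, Submodule.ideal_span_singleton_smul,
    Submodule.mem_smul_pointwise_iff_exists]
  simp only [← Nat.cast_pow, natCast_zsmul]

theorem mem_span_pow_smul_top_iff (n i : ℕ) (x : G) :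
    x ∈ (Ideal.span {(n : ℤ)} ^ i • ⊤ : Submodule ℤ G) ↔ x ∈ nMul G (n ^ i) := by
  simp [mem_span_pow_smul_iff, mem_nMul]

theorem exists_dvd_zsmul_eq_self [AddGroup.FG G] {x : G} (hx : ∀ n, 0 < n → x ∈ nMul G n)
    {n : ℕ} (hn : 0 < n) : ∃ r : ℤ, (n : ℤ) ∣ r ∧ r • x = x := by
  have : Module.Finite ℤ G := Module.Finite.iff_addGroup_fg.2 inferInstance
  have hmem : x ∈ (⨅ i : ℕ, Ideal.span {(n : ℤ)} ^ i • ⊤ : Submodule ℤ G) :=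
    Submodule.mem_iInf _ |>.2 fun i => (mem_span_pow_smul_top_iff n i x).2 (hx _ (by positivity))
  obtain ⟨⟨r, hr⟩, hrx⟩ := (Ideal.mem_iInf_smul_pow_eq_bot_iff _ x).1 hmem
  exact ⟨r, Ideal.mem_span_singleton.1 hr, hrx⟩

theorem eq_zero_of_forall_mem_nMul [AddGroup.FG G] {x : G} (hx : ∀ n, 0 < n → x ∈ nMul G n) :
    x = 0 := by
  -- Krull for the ideal `(2)` makes `x` torsion of odd order `d = r - 1`; Krull for `(d)` kills it.
  obtain ⟨r, hr2, hrx⟩ := exists_dvd_zsmul_eq_self hx two_pos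
  have hd : (r - 1) • x = 0 := by rw [sub_smul, hrx, one_smul, sub_self]
  have hd0 : 0 < (r - 1).natAbs := Int.natAbs_pos.2 (by omega)
  obtain ⟨s, hs, hsx⟩ := exists_dvd_zsmul_eq_self hx hd0
  obtain ⟨t, rfl⟩ := Int.natAbs_dvd.1 hs
  rw [← hsx, mul_comm, mul_smul, hd, smul_zero]

theorem exists_comap_nMul_pow_le {H : Type*} [AddCommGroup H] [AddGroup.FG H]
    {f : G →+ H} (hf : Function.Injective f) (n : ℕ) :
    ∃ k, (nMul H (n ^ (k + 1))).comap f ≤ nMul G n := by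
  have : Module.Finite ℤ H := Module.Finite.iff_addGroup_fg.2 inferInstance
  -- Artin–Rees for the `(n)`-adic filtration of `H` and the submodule `f(G)`
  obtain ⟨k, hk⟩ := Ideal.exists_pow_inf_eq_pow_smul (Ideal.span {(n : ℤ)})
    (LinearMap.range f.toIntLinearMap)
  have hle : Ideal.span {(n : ℤ)} ^ (k + 1) • ⊤ ⊓ LinearMap.range f.toIntLinearMap ≤
      Ideal.span {(n : ℤ)} ^ 1 • LinearMap.range f.toIntLinearMap := by
    rw [hk (k + 1) k.le_succ, Nat.add_sub_cancel_left]
    exact smul_mono_right _ inf_le_right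
  refine ⟨k, fun a ha => ?_⟩
  obtain ⟨_, ⟨a', rfl⟩, ha'⟩ :=
    (mem_span_pow_smul_iff n 1 _ _).1 (hle ⟨(mem_span_pow_smul_top_iff n _ _).2 ha, a, rfl⟩)
  exact ⟨a', hf (by simpa using ha')⟩

end IntAdic

/-- `ℕ+` preordered by divisibility: the index category of the limit `lim_n G/nG`. -/
def PNatDvd : Type := ℕ+

instance : Preorder PNatDvd where
  le m n := (m : ℕ+).val ∣ (n : ℕ+).val
  le_refl _ := dvd_rfl
  le_trans _ _ _ := dvd_trans

instance : IsDirectedOrder PNatDvd where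
  directed m n := ⟨Mul.mul (α := ℕ+) m n, dvd_mul_right _ _, dvd_mul_left _ _⟩

section Completion

variable {G H K : Type*} [AddCommGroup G] [AddCommGroup H] [AddCommGroup K]

theorem transMap_self (n : ℕ) : transMap G n n dvd_rfl = AddMonoidHom.id _ := by
  ext; rfl

theorem transMap_transMap {m n k : ℕ} (h : m ∣ n) (h' : n ∣ k) (x : G ⧸ nMul G k) :
    transMap G m n h (transMap G n k h' x) = transMap G m k (h.trans h') x :=
  induction_on x fun _ => rfl

theorem quotMap_comp (φ : G →+ H) (ψ : H →+ K) (n : ℕ) :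
    quotMap (ψ.comp φ) n = (quotMap ψ n).comp (quotMap φ n) := by
  ext; rfl

theorem quotMap_zero (n : ℕ) : quotMap (0 : G →+ H) n = 0 := by
  ext; rfl

@[simp]
theorem completionMap_apply (φ : G →+ H) (x : PCompletion G) (n : ℕ+) :
    (completionMap φ x).1 n = quotMap φ n (x.1 n) := rfl

theorem completionMap_comp (φ : G →+ H) (ψ : H →+ K) :
    completionMap (ψ.comp φ) = (completionMap ψ).comp (completionMap φ) := by
  ext x n
  simp [quotMap_comp]

theorem completionMap_zero : completionMap (0 : G →+ H) = 0 := by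
  ext x n
  simp [quotMap_zero]

theorem toCompletion_injective [AddGroup.FG G] : Function.Injective (toCompletion G) :=
  (injective_iff_map_eq_zero _).2 fun x hx => eq_zero_of_forall_mem_nMul fun n hn =>
    (eq_zero_iff x).1 (congrArg (fun y : PCompletion G => y.1 ⟨n, hn⟩) hx)

open CategoryTheory Opposite in
theorem exists_mem_pCompletion [AddGroup.FG G] (S : ∀ n : ℕ+, Set (G ⧸ nMul G n))
    (hne : ∀ n, (S n).Nonempty)
    (hS : ∀ (m n : ℕ+) (h : (m : ℕ) ∣ n), ∀ x ∈ S n, transMap G m n h x ∈ S m) :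
    ∃ a : PCompletion G, ∀ n, a.1 n ∈ S n := by
  let F : PNatDvdᵒᵖ ⥤ Type _ :=
    { obj n := S n.unop
      map h := TypeCat.ofHom fun x => ⟨transMap G _ _ (leOfHom h.unop) x, hS _ _ _ _ x.2⟩
      map_id _ := by ext x; simp [transMap_self]
      map_comp _ _ := by ext x; simp [transMap_transMap] }
  have (n : PNatDvdᵒᵖ) : Finite (F.obj n) :=
    have := finite_quotient_nMul (G := G) (n.unop : ℕ+).pos
    Subtype.finite
  have (n : PNatDvdᵒᵖ) : Nonempty (F.obj n) := (hne _).to_subtype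
  obtain ⟨s, hs⟩ := nonempty_sections_of_finite_inverse_system F
  exact ⟨⟨fun n => (s (op n)).1, fun m n h => congrArg Subtype.val (hs (homOfLE h).op)⟩,
    fun n => (s (op n)).2⟩

end Completion

section Exactness

variable {G H K : Type*} [AddCommGroup G] [AddCommGroup H] [AddCommGroup K]

theorem completionMap_injective [AddGroup.FG H] {f : G →+ H} (hf : Function.Injective f) :
    Function.Injective (completionMap f) := by
  refine (injective_iff_map_eq_zero _).2 fun x hx => Subtype.ext (funext fun n => ?_)
  obtain ⟨k, hk⟩ := exists_comap_nMul_pow_le hf n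
  obtain ⟨a, ha⟩ := mk_surjective (x.1 (n ^ (k + 1)))
  have hfa : f a ∈ nMul H (n ^ (k + 1) : ℕ+) := by
    rw [← eq_zero_iff, ← quotMap_mk, ha]
    exact congrArg (fun y : PCompletion H => y.1 (n ^ (k + 1))) hx
  rw [← x.2 n (n ^ (k + 1)) (by simp), ← ha]
  exact (eq_zero_iff _).2 (hk (by simpa using hfa))

theorem mem_range_completionMap [AddGroup.FG G] {φ : G →+ H} {y : PCompletion H}
    (hy : ∀ n : ℕ+, y.1 n ∈ (quotMap φ n).range) : y ∈ (completionMap φ).range := by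
  obtain ⟨x, hx⟩ := exists_mem_pCompletion (fun n => quotMap φ n ⁻¹' {y.1 n}) hy
    fun m n h x hx => by
      simp only [Set.mem_preimage, Set.mem_singleton_iff] at hx ⊢
      rw [← transMap_quotMap, hx, y.2 m n h]
  exact ⟨x, Subtype.ext (funext hx)⟩

theorem completionMap_surjective [AddGroup.FG G] {φ : G →+ H} (hφ : Function.Surjective φ) :
    Function.Surjective (completionMap φ) :=
  fun _ => mem_range_completionMap fun n => quotMap_surjective hφ n _

theorem ker_completionMap_le_range [AddGroup.FG G] {f : G →+ H} {g : H →+ K}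
    (hg : Function.Surjective g) (hfg : f.range = g.ker) :
    (completionMap g).ker ≤ (completionMap f).range :=
  fun _ hy => mem_range_completionMap fun n =>
    ker_quotMap_le_range hg hfg n (congrArg (fun z : PCompletion K => z.1 n) hy)

end Exactness

section Cokernel

variable {G H K : Type*} [AddCommGroup G] [AddCommGroup H] [AddCommGroup K]

theorem completionMap_completionMap_eq_zero {f : G →+ H} {g : H →+ K} (hfg : g.comp f = 0)
    (x : PCompletion G) : completionMap g (completionMap f x) = 0 := by
  rw [← AddMonoidHom.comp_apply, ← completionMap_comp, hfg, completionMap_zero,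
    AddMonoidHom.zero_apply]

@[simp]
theorem cokerMap_mk (φ : G →+ H) (x : PCompletion G) :
    cokerMap φ (mk x) = mk (completionMap φ x) := rfl

theorem cokerMap_injective {f : G →+ H} {g : H →+ K} (hfg : f.range = g.ker)
    (hK : Function.Injective (toCompletion K)) (hf : Function.Injective (completionMap f)) :
    Function.Injective (cokerMap f) := by
  refine (injective_iff_map_eq_zero _).2 fun x hx => ?_
  obtain ⟨a, rfl⟩ := mk_surjective x
  obtain ⟨b, hb⟩ := (eq_zero_iff _).1 hx
  have hgb : g b = 0 := hK <| by
    rw [← completionMap_toCompletion, hb,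
      completionMap_completionMap_eq_zero ((AddMonoidHom.range_le_ker_iff f g).1 hfg.le), map_zero]
  obtain ⟨a₀, rfl⟩ : b ∈ f.range := hfg ▸ hgb
  have ha : toCompletion G a₀ = a := hf (by rw [completionMap_toCompletion, hb])
  exact (eq_zero_iff _).2 ⟨a₀, ha⟩

theorem cokerMap_surjective {φ : G →+ H} (hφ : Function.Surjective (completionMap φ)) :
    Function.Surjective (cokerMap φ) := by
  intro y
  obtain ⟨y, rfl⟩ := mk_surjective y
  obtain ⟨x, rfl⟩ := hφ y
  exact ⟨mk x, rfl⟩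

theorem range_cokerMap_eq_ker {f : G →+ H} {g : H →+ K} (hg : Function.Surjective g)
    (hfg : g.comp f = 0) (hex : (completionMap g).ker ≤ (completionMap f).range) :
    (cokerMap f).range = (cokerMap g).ker := by
  refine le_antisymm ?_ fun y hy => ?_
  · rintro _ ⟨x, rfl⟩
    obtain ⟨a, rfl⟩ := mk_surjective x
    rw [AddMonoidHom.mem_ker, cokerMap_mk, cokerMap_mk, completionMap_completionMap_eq_zero hfg]
    rfl
  · obtain ⟨b, rfl⟩ := mk_surjective y
    obtain ⟨c, hc⟩ := (eq_zero_iff _).1 hy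
    obtain ⟨b₀, rfl⟩ := hg c
    obtain ⟨a, ha⟩ : b - toCompletion H b₀ ∈ (completionMap f).range := hex <| by
      rw [AddMonoidHom.mem_ker, map_sub, completionMap_toCompletion, ← hc, sub_self]
    refine ⟨mk a, eq_iff_sub_mem.2 ?_⟩
    rw [ha, sub_sub_cancel_left]
    exact neg_mem ⟨b₀, rfl⟩

end Cokernel

/--
Let `0 → A → B → C → 0` be a short exact sequence of finitely generated
abelian groups. Then the natural map `G → G∧` is injective for every finitely generated
abelian group `G`, and the induced sequence of cokernels `0 → A∧/A → B∧/B → C∧/C → 0`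
is exact: `A∧/A → B∧/B` is injective, `B∧/B → C∧/C` is surjective, and the kernel of
`B∧/B → C∧/C` equals the image of `A∧/A → B∧/B`.
-/
theorem stmt_2 {A B C : Type u} [AddCommGroup A] [AddCommGroup B] [AddCommGroup C]
    [AddGroup.FG A] [AddGroup.FG B] [AddGroup.FG C]
    (f : A →+ B) (g : B →+ C)
    (hf : Function.Injective f) (hg : Function.Surjective g)
    (hfg : f.range = g.ker) :
    (∀ (G : Type u) [AddCommGroup G] [AddGroup.FG G],
        Function.Injective (toCompletion G)) ∧
      Function.Injective (cokerMap f) ∧ Function.Surjective (cokerMap g) ∧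
        (cokerMap f).range = (cokerMap g).ker :=
  ⟨fun _ _ _ => toCompletion_injective,
    cokerMap_injective hfg toCompletion_injective (completionMap_injective hf),
    cokerMap_surjective (completionMap_surjective hg),
    range_cokerMap_eq_ker hg ((AddMonoidHom.range_le_ker_iff f g).1 hfg.le)
      (ker_completionMap_le_range hg hfg)⟩
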